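/- Let Ω ⊂ ℝ² be the unit disk minus the radius [0,1) on the real axis. Then M^{1,p}(Ω) ≠ W^{1,p}(Ω) for every 1 < p ≤ ∞. -/

import Mathlib

open MeasureTheory Set Metric
open scoped ENNReal

noncomputable section

/-- `G` is a weak (distributional) gradient of `u` on the open set `Ω ⊆ ℝ²`. -/
def IsWeakGradientE (Ω : Set (EuclideanSpace ℝ (Fin 2)))
    (u : EuclideanSpace ℝ (Fin 2) → ℝ) (G : EuclideanSpace ℝ (Fin 2) → EuclideanSpace ℝ (Fin 2)) : Prop :=
  ∀ φ : EuclideanSpace ℝ (Fin 2) → ℝ, ContDiff ℝ (⊤ : ℕ∞) φ → HasCompactSupport φ →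
    tsupport φ ⊆ Ω → ∀ v : EuclideanSpace ℝ (Fin 2),
      ∫ x in Ω, u x * fderiv ℝ φ x v = - ∫ x in Ω, (inner ℝ (G x) v : ℝ) * φ x

/-- Membership in the Sobolev space `W^{1,p}(Ω)`. -/
def MemW1p (p : ℝ≥0∞) (Ω : Set (EuclideanSpace ℝ (Fin 2)))
    (u : EuclideanSpace ℝ (Fin 2) → ℝ) : Prop :=
  MemLp u p (volume.restrict Ω) ∧
    ∃ G, IsWeakGradientE Ω u G ∧ MemLp (fun x => ‖G x‖) p (volume.restrict Ω)

/-- Membership in the Hajłasz–Sobolev space `M^{1,p}(Ω)`. -/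
def MemM1p (p : ℝ≥0∞) (Ω : Set (EuclideanSpace ℝ (Fin 2)))
    (u : EuclideanSpace ℝ (Fin 2) → ℝ) : Prop :=
  MemLp u p (volume.restrict Ω) ∧
    ∃ g : EuclideanSpace ℝ (Fin 2) → ℝ, (∀ z, 0 ≤ g z) ∧
      (∃ E : Set (EuclideanSpace ℝ (Fin 2)), volume E = 0 ∧
        ∀ x ∈ Ω \ E, ∀ y ∈ Ω \ E, |u x - u y| ≤ dist x y * (g x + g y)) ∧
      MemLp g p (volume.restrict Ω)

/-- The slit disk: the unit disk minus the radius `[0,1)` on the real axis. -/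
def slitDisk : Set (EuclideanSpace ℝ (Fin 2)) :=
  ball (0 : EuclideanSpace ℝ (Fin 2)) 1 \
    {z : EuclideanSpace ℝ (Fin 2) | 0 ≤ z 0 ∧ z 0 < 1 ∧ z 1 = 0}

namespace SlitDiskProof

abbrev E2 := EuclideanSpace ℝ (Fin 2)

/-- Smooth cutoff in the first variable. -/
def al (x : ℝ) : ℝ := Real.smoothTransition (8 * x - 1)

lemma contDiff_al : ContDiff ℝ 1 al :=
  Real.smoothTransition.contDiff.comp ((contDiff_const.mul contDiff_id).sub contDiff_const)

lemma al_zero {x : ℝ} (h : x ≤ 1/8) : al x = 0 :=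
  Real.smoothTransition.zero_of_nonpos (by linarith)

lemma al_one {x : ℝ} (h : 1/4 ≤ x) : al x = 1 :=
  Real.smoothTransition.one_of_one_le (by linarith)

lemma al_nonneg (x : ℝ) : 0 ≤ al x := Real.smoothTransition.nonneg _
lemma al_le_one (x : ℝ) : al x ≤ 1 := Real.smoothTransition.le_one _

lemma support_deriv_al : Function.support (deriv al) ⊆ Icc (1/8) (1/4) := by
  intro x hx
  by_contra hmem
  rw [mem_Icc, not_and_or, not_le, not_le] at hmem
  apply hx
  rcases hmem with h | h
  · have he : al =ᶠ[nhds x] fun _ => (0:ℝ) :=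
      Filter.eventuallyEq_of_mem (Iio_mem_nhds h) fun y hy => al_zero (le_of_lt hy)
    rw [he.deriv_eq, deriv_const]
  · have he : al =ᶠ[nhds x] fun _ => (1:ℝ) :=
      Filter.eventuallyEq_of_mem (Ioi_mem_nhds h) fun y hy => al_one (le_of_lt hy)
    rw [he.deriv_eq, deriv_const]

lemma exists_bound_deriv_al : ∃ C : ℝ, 0 ≤ C ∧ ∀ x, |deriv al x| ≤ C := by
  have hcs : HasCompactSupport (deriv al) :=
    HasCompactSupport.of_support_subset_isCompact isCompact_Icc support_deriv_al
  obtain ⟨C, hC⟩ := hcs.exists_bound_of_continuous (contDiff_al.continuous_deriv le_rfl)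
  exact ⟨max C 0, le_max_right _ _, fun x => le_trans (hC x) (le_max_left _ _)⟩

/-- The Sobolev function: `al(x)` on the upper half, `0` on the lower half. -/
def uu : E2 → ℝ := fun z => if 0 < z 1 then al (z 0) else 0

/-- Its (weak = a.e. classical) gradient. -/
def GG : E2 → E2 := fun z =>
  if 0 < z 1 then deriv al (z 0) • EuclideanSpace.single (0 : Fin 2) (1:ℝ) else 0

/-- The derivative of `uu` as a continuous linear map. -/
def DD (z : E2) : E2 →L[ℝ] ℝ :=
  if 0 < z 1 then deriv al (z 0) • EuclideanSpace.proj (0 : Fin 2) else 0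

lemma DD_apply (z v : E2) : DD z v = (inner ℝ (GG z) v : ℝ) := by
  unfold DD GG
  split
  · rw [real_inner_smul_left, EuclideanSpace.inner_single_left]; simp
  · simp

/-- The open set on which `uu` is smooth. -/
def UU : Set E2 := {z | z 0 < 1/8} ∪ {z | z 1 ≠ 0}

lemma measurableSet_pos1 : MeasurableSet {z : E2 | 0 < z 1} :=
  measurableSet_lt measurable_const (EuclideanSpace.proj (𝕜 := ℝ) (1 : Fin 2)).continuous.measurable

lemma measurable_uu : Measurable uu := by
  refine Measurable.ite measurableSet_pos1 ?_ measurable_const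
  exact (contDiff_al.continuous.comp
    (EuclideanSpace.proj (𝕜 := ℝ) (0 : Fin 2)).continuous).measurable

lemma measurable_GG : Measurable GG := by
  refine Measurable.ite measurableSet_pos1 ?_ measurable_const
  exact (((contDiff_al.continuous_deriv le_rfl).comp
    (EuclideanSpace.proj (𝕜 := ℝ) (0 : Fin 2)).continuous).smul continuous_const).measurable

lemma abs_uu_le (z : E2) : ‖uu z‖ ≤ 1 := by
  unfold uu
  split
  · rw [Real.norm_eq_abs, abs_le]; exact ⟨by linarith [al_nonneg (z 0)], al_le_one _⟩
  · simp

lemma norm_GG_le {C : ℝ} (hC0 : 0 ≤ C) (hC : ∀ x, |deriv al x| ≤ C) (z : E2) : ‖GG z‖ ≤ C := by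
  unfold GG
  split
  · rw [norm_smul, EuclideanSpace.norm_single]
    simpa using hC (z 0)
  · simpa using hC0

lemma slitDisk_subset_UU : slitDisk ⊆ UU := by
  rintro z ⟨hball, hslit⟩
  by_cases h1 : z 1 = 0
  · left
    show z 0 < 1/8
    by_contra hge
    push_neg at hge
    apply hslit
    refine ⟨by linarith, ?_, h1⟩
    -- |z 0| ≤ ‖z‖ < 1
    have hn : ‖z‖ < 1 := mem_ball_zero_iff.mp hball
    have : |z 0| ≤ ‖z‖ := by
      rw [EuclideanSpace.norm_eq, Fin.sum_univ_two]
      have h := Real.sqrt_le_sqrt (show ‖z 0‖^2 ≤ ‖z 0‖^2 + ‖z 1‖^2 by nlinarith [sq_nonneg (‖z 1‖)])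
      rwa [Real.sqrt_sq (norm_nonneg _)] at h
    calc z 0 ≤ |z 0| := le_abs_self _
    _ ≤ ‖z‖ := this
    _ < 1 := hn
  · right; exact h1

lemma hasFDerivAt_uu {z : E2} (hz : z ∈ UU) : HasFDerivAt uu (DD z) z := by
  by_cases hpos : 0 < z 1
  · have h1 : HasDerivAt al (deriv al (z 0)) (z 0) :=
      ((contDiff_al.differentiable one_ne_zero) (z 0)).hasDerivAt
    have h2 : HasFDerivAt (fun w : E2 => w 0)
        (EuclideanSpace.proj (𝕜 := ℝ) (0 : Fin 2) : E2 →L[ℝ] ℝ) z :=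
      (EuclideanSpace.proj (𝕜 := ℝ) (0 : Fin 2)).hasFDerivAt
    have base : HasFDerivAt (fun w : E2 => al (w 0))
        (deriv al (z 0) • EuclideanSpace.proj (𝕜 := ℝ) (0 : Fin 2)) z :=
      HasDerivAt.comp_hasFDerivAt (h₂ := al) z h1 h2
    have hmem : {w : E2 | 0 < w 1} ∈ nhds z :=
      (isOpen_lt continuous_const
        (EuclideanSpace.proj (𝕜 := ℝ) (1 : Fin 2)).continuous).mem_nhds hpos
    have he : uu =ᶠ[nhds z] fun w => al (w 0) :=
      Filter.eventuallyEq_of_mem hmem fun w hw => if_pos hw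
    rw [DD, if_pos hpos]
    exact base.congr_of_eventuallyEq he
  · rw [DD, if_neg hpos]
    have hmem : ∃ s ∈ nhds z, ∀ w ∈ s, uu w = 0 := by
      rcases hz with h0 | h1
      · refine ⟨{w : E2 | w 0 < 1/8},
          (isOpen_lt (EuclideanSpace.proj (𝕜 := ℝ) (0 : Fin 2)).continuous
            continuous_const).mem_nhds h0, fun w hw => ?_⟩
        unfold uu
        split
        · exact al_zero (le_of_lt hw)
        · rfl
      · have hneg : z 1 < 0 := lt_of_le_of_ne (not_lt.mp hpos) h1
        refine ⟨{w : E2 | w 1 < 0},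
          (isOpen_lt (EuclideanSpace.proj (𝕜 := ℝ) (1 : Fin 2)).continuous
            continuous_const).mem_nhds hneg, fun w hw => ?_⟩
        unfold uu
        rw [if_neg (by exact not_lt.mpr (le_of_lt hw))]
    obtain ⟨s, hs, h0⟩ := hmem
    have he : uu =ᶠ[nhds z] fun _ => (0:ℝ) := Filter.eventuallyEq_of_mem hs h0
    exact (hasFDerivAt_const (0:ℝ) z).congr_of_eventuallyEq he

lemma measurableSet_slitDisk : MeasurableSet slitDisk := by
  refine measurableSet_ball.diff ?_
  have : {z : E2 | 0 ≤ z 0 ∧ z 0 < 1 ∧ z 1 = 0}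
      = {z : E2 | 0 ≤ z 0} ∩ ({z : E2 | z 0 < 1} ∩ {z : E2 | z 1 = 0}) := by
    ext z; simp [mem_setOf_eq, and_assoc]
  rw [this]
  have m0 := (EuclideanSpace.proj (𝕜 := ℝ) (0 : Fin 2)).continuous.measurable
  have m1 := (EuclideanSpace.proj (𝕜 := ℝ) (1 : Fin 2)).continuous.measurable
  exact (measurableSet_le measurable_const m0).inter
    ((measurableSet_lt m0 measurable_const).inter (m1 (measurableSet_singleton 0)))

instance : IsFiniteMeasure (volume.restrict slitDisk) := by
  constructor
  rw [Measure.restrict_apply_univ]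
  exact lt_of_le_of_lt (measure_mono diff_subset) measure_ball_lt_top


lemma weakGradient : IsWeakGradientE slitDisk uu GG := by
  intro phi hphi hphic hphisupp v
  obtain ⟨C, hC0, hC⟩ := exists_bound_deriv_al
  have hphid : Differentiable ℝ phi := hphi.differentiable (by simp)
  have hphicont : Continuous phi := hphi.continuous
  set w : E2 → ℝ := fun x => uu x * phi x with hw
  -- everywhere, `w` has the expected derivative
  have hder : ∀ x, HasFDerivAt w (uu x • fderiv ℝ phi x + phi x • DD x) x := by
    intro x
    by_cases hx : x ∈ tsupport phi
    · exact (hasFDerivAt_uu (slitDisk_subset_UU (hphisupp hx))).mul (hphid x).hasFDerivAt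
    · have h0 : w =ᶠ[nhds x] fun _ => (0:ℝ) := by
        have hmem : (tsupport phi)ᶜ ∈ nhds x :=
          (isClosed_tsupport phi).isOpen_compl.mem_nhds hx
        exact Filter.eventuallyEq_of_mem hmem fun y hy => by
          simp [hw, image_eq_zero_of_notMem_tsupport hy]
      have hz : HasFDerivAt w (0 : E2 →L[ℝ] ℝ) x :=
        (hasFDerivAt_const (𝕜 := ℝ) (0:ℝ) x).congr_of_eventuallyEq h0
      have hphix : phi x = 0 := image_eq_zero_of_notMem_tsupport hx
      have hfx : fderiv ℝ phi x = 0 :=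
        Function.notMem_support.mp fun h => hx (support_fderiv_subset ℝ h)
      convert hz using 1
      simp [hphix, hfx]
  have hwdiff : Differentiable ℝ w := fun x => (hder x).differentiableAt
  have hfw : ∀ x, fderiv ℝ w x v = uu x * fderiv ℝ phi x v + phi x * DD x v := by
    intro x
    rw [(hder x).fderiv]
    simp [smul_eq_mul]
  -- integrability facts
  have hIphi : Integrable phi := hphicont.integrable_of_hasCompactSupport hphic
  have hcphiv : Continuous fun x => fderiv ℝ phi x v :=
    (hphi.continuous_fderiv_apply (by simp)).comp (continuous_id.prodMk continuous_const)
  have hIphiv : Integrable (fun x => fderiv ℝ phi x v) :=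
    hcphiv.integrable_of_hasCompactSupport (hphic.fderiv_apply ℝ v)
  have hDDv_meas : Measurable fun x => DD x v := by
    have : (fun x => DD x v) = fun x => if 0 < x 1 then deriv al (x 0) * v 0 else 0 := by
      funext x
      unfold DD
      rw [apply_ite (fun L : E2 →L[ℝ] ℝ => L v)]
      simp [smul_eq_mul]
    rw [this]
    refine Measurable.ite measurableSet_pos1 ?_ measurable_const
    exact (((contDiff_al.continuous_deriv le_rfl).comp
      (EuclideanSpace.proj (𝕜 := ℝ) (0 : Fin 2)).continuous).mul continuous_const).measurable
  have hDDv_bound : ∀ x, |DD x v| ≤ C * |v 0| := by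
    intro x
    unfold DD
    rw [apply_ite (fun L : E2 →L[ℝ] ℝ => L v)]
    split
    · simp only [ContinuousLinearMap.smul_apply, smul_eq_mul]
      rw [abs_mul]
      have : |(EuclideanSpace.proj (𝕜 := ℝ) (0 : Fin 2)) v| = |v 0| := rfl
      rw [this]
      exact mul_le_mul_of_nonneg_right (hC _) (abs_nonneg _)
    · simp
      positivity
  have hI1 : Integrable (fun x => uu x * fderiv ℝ phi x v) := by
    refine Integrable.mono' hIphiv.norm
      (measurable_uu.aestronglyMeasurable.mul hcphiv.aestronglyMeasurable)
      (ae_of_all _ fun x => ?_)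
    rw [norm_mul]
    calc ‖uu x‖ * ‖fderiv ℝ phi x v‖ ≤ 1 * ‖fderiv ℝ phi x v‖ :=
        mul_le_mul_of_nonneg_right (abs_uu_le x) (norm_nonneg _)
    _ = ‖fderiv ℝ phi x v‖ := one_mul _
  have hI2 : Integrable (fun x => phi x * DD x v) := by
    refine Integrable.mono' (hIphi.norm.mul_const (C * |v 0|))
      (hphicont.aestronglyMeasurable.mul hDDv_meas.aestronglyMeasurable)
      (ae_of_all _ fun x => ?_)
    rw [norm_mul]
    exact mul_le_mul_of_nonneg_left (hDDv_bound x) (norm_nonneg _)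
  have hIw : Integrable w := by
    refine Integrable.mono' hIphi.norm
      (measurable_uu.aestronglyMeasurable.mul hphicont.aestronglyMeasurable)
      (ae_of_all _ fun x => ?_)
    rw [norm_mul]
    calc ‖uu x‖ * ‖phi x‖ ≤ 1 * ‖phi x‖ :=
        mul_le_mul_of_nonneg_right (abs_uu_le x) (norm_nonneg _)
    _ = ‖phi x‖ := one_mul _
  have hIwv : Integrable (fun x => fderiv ℝ w x v) := by
    refine (hI1.add hI2).congr (ae_of_all _ fun x => ?_)
    simp only [Pi.add_apply]
    exact (hfw x).symm
  -- integration by parts against the constant function 1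
  have hkey : ∫ x, fderiv ℝ w x v = 0 := by
    have h := integral_mul_fderiv_eq_neg_fderiv_mul_of_integrable
      (f := fun _ : E2 => (1:ℝ)) (g := w) (v := v) (μ := volume)
      ?_ ?_ ?_ (fun x _ => differentiableAt_const _) (fun x _ => hwdiff x)
    · simpa using h
    · have hz : (fun x : E2 => fderiv ℝ (fun _ => (1:ℝ)) x v * w x) = fun _ => (0:ℝ) := by
        funext x; simp
      rw [hz]
      exact integrable_zero _ _ _
    · simpa using hIwv
    · simpa using hIw
  have hsplit : (∫ x, uu x * fderiv ℝ phi x v) + (∫ x, phi x * DD x v) = 0 := by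
    rw [← integral_add hI1 hI2, ← hkey]
    refine integral_congr_ae (ae_of_all _ fun x => ?_)
    simp only [Pi.add_apply]
    exact (hfw x).symm
  -- replace set integrals by global ones
  have e1 : ∫ x in slitDisk, uu x * fderiv ℝ phi x v = ∫ x, uu x * fderiv ℝ phi x v := by
    refine setIntegral_eq_integral_of_forall_compl_eq_zero fun x hx => ?_
    have hxs : x ∉ tsupport phi := fun h => hx (hphisupp h)
    have : fderiv ℝ phi x = 0 :=
      Function.notMem_support.mp fun h => hxs (support_fderiv_subset ℝ h)
    simp [this]
  have e2 : ∫ x in slitDisk, (inner ℝ (GG x) v : ℝ) * phi x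
      = ∫ x, (inner ℝ (GG x) v : ℝ) * phi x := by
    refine setIntegral_eq_integral_of_forall_compl_eq_zero fun x hx => ?_
    have hxs : x ∉ tsupport phi := fun h => hx (hphisupp h)
    simp [image_eq_zero_of_notMem_tsupport hxs]
  rw [e1, e2]
  have e3 : ∫ x, (inner ℝ (GG x) v : ℝ) * phi x = ∫ x, phi x * DD x v := by
    refine integral_congr_ae (ae_of_all _ fun x => ?_)
    show (inner ℝ (GG x) v : ℝ) * phi x = phi x * DD x v
    rw [DD_apply, mul_comm]
  rw [e3]
  linarith [hsplit]


/-- The coordinate identification of `ℝ²` with `ℝ × ℝ`. -/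
def Phi : E2 ≃ᵐ ℝ × ℝ :=
  (MeasurableEquiv.toLp 2 (Fin 2 → ℝ)).symm.trans MeasurableEquiv.finTwoArrow

lemma Phi_apply (z : E2) : Phi z = (z 0, z 1) := rfl

lemma volume_preserving_Phi : MeasurePreserving (Phi : E2 → ℝ × ℝ) volume volume :=
  (volume_preserving_finTwoArrow ℝ).comp (EuclideanSpace.volume_preserving_symm_measurableEquiv_toLp (Fin 2))

/-- Reflection across the horizontal axis. -/
def sigma2 : E2 ≃ᵐ E2 :=
  Phi.trans (((MeasurableEquiv.refl ℝ).prodCongr (MeasurableEquiv.neg ℝ)).trans Phi.symm)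

lemma sigma2_apply0 (z : E2) : sigma2 z 0 = z 0 := rfl
lemma sigma2_apply1 (z : E2) : sigma2 z 1 = - z 1 := rfl

lemma volume_preserving_sigma2 : MeasurePreserving (sigma2 : E2 → E2) volume volume := by
  have vpRefl : MeasurePreserving (fun q : ℝ × ℝ => (q.1, -q.2)) volume volume := by
    rw [Measure.volume_eq_prod]
    exact (MeasurePreserving.id volume).prod (Measure.measurePreserving_neg volume)
  have : (sigma2 : E2 → E2)
      = (Phi.symm : ℝ × ℝ → E2) ∘ (fun q : ℝ × ℝ => (q.1, -q.2)) ∘ (Phi : E2 → ℝ × ℝ) := rfl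
  rw [this]
  exact (volume_preserving_Phi.symm Phi).comp (vpRefl.comp volume_preserving_Phi)

lemma not_memM1p (p : ℝ≥0∞) (hp : 1 < p) : ¬ MemM1p p slitDisk uu := by
  rintro ⟨-, g, hg0, ⟨E0, hE0, hineq⟩, hgLp⟩
  -- replace `g` by a measurable nonnegative version `g2`
  obtain ⟨g1, hg1sm, hg1ae⟩ := hgLp.1
  set g2 : E2 → ℝ := fun z => max (g1 z) 0 with hg2def
  have hg2meas : Measurable g2 := hg1sm.measurable.max measurable_const
  have hg2nonneg : ∀ z, 0 ≤ g2 z := fun z => le_max_right _ _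
  have hae : g =ᵐ[volume.restrict slitDisk] g2 := hg1ae.mono fun z hz => by
    simp only [hg2def]; rw [← hz, max_eq_left (hg0 z)]
  set N := eLpNorm g2 p (volume.restrict slitDisk) with hNdef
  have hNtop : N ≠ ⊤ := by
    rw [hNdef, ← eLpNorm_congr_ae hae]; exact hgLp.2.ne
  set D : Set E2 := {z | ¬ g z = g2 z} ∩ slitDisk with hDdef
  have hDnull : volume D = 0 := by
    have h1 : (volume.restrict slitDisk) {z | ¬ g z = g2 z} = 0 := hae
    rwa [Measure.restrict_apply' measurableSet_slitDisk] at h1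
  set E1 := E0 ∪ D with hE1def
  have hE1 : volume E1 = 0 := measure_union_null hE0 hDnull
  have hineq2 : ∀ x ∈ slitDisk \ E1, ∀ y ∈ slitDisk \ E1,
      |uu x - uu y| ≤ dist x y * (g2 x + g2 y) := by
    intro x hx y hy
    have hgx : g x = g2 x := by
      by_contra h; exact hx.2 (Or.inr ⟨h, hx.1⟩)
    have hgy : g y = g2 y := by
      by_contra h; exact hy.2 (Or.inr ⟨h, hy.1⟩)
    rw [← hgx, ← hgy]
    exact hineq x ⟨hx.1, fun h => hx.2 (Or.inl h)⟩ y ⟨hy.1, fun h => hy.2 (Or.inl h)⟩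
  -- the exponent
  set t : ℝ := 1 - 1/p.toReal with htdef
  have ht : 0 < t := by
    rcases eq_or_ne p ⊤ with hptop | hptop
    · rw [htdef, hptop]; simp
    · have hpr : 1 < p.toReal := by
        rw [← ENNReal.toReal_one]
        exact (ENNReal.toReal_lt_toReal (by simp) hptop).mpr hp
      rw [htdef]
      have : 1/p.toReal < 1 := by
        rw [div_lt_one (by linarith)]; exact hpr
      linarith
  -- main estimate
  have main : ∀ ε : ℝ, 0 < ε → ε ≤ 1/2 →
      ENNReal.ofReal (1/8) ≤ N * ENNReal.ofReal (ε/2) ^ t := by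
    intro ε hε0 hεhalf
    set A : Set E2 := Phi ⁻¹' (Ioo (4⁻¹:ℝ) 2⁻¹ ×ˢ Ioo (0:ℝ) ε) with hAdef
    set B : Set E2 := Phi ⁻¹' (Ioo (4⁻¹:ℝ) 2⁻¹ ×ˢ Ioo (-ε) (0:ℝ)) with hBdef
    have hmA : MeasurableSet A := Phi.measurable (measurableSet_Ioo.prod measurableSet_Ioo)
    have hmB : MeasurableSet B := Phi.measurable (measurableSet_Ioo.prod measurableSet_Ioo)
    have hAmem : ∀ z : E2, z ∈ A ↔ ((4⁻¹:ℝ) < z 0 ∧ z 0 < 2⁻¹) ∧ 0 < z 1 ∧ z 1 < ε :=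
      fun z => Iff.rfl
    have hBmem : ∀ z : E2, z ∈ B ↔ ((4⁻¹:ℝ) < z 0 ∧ z 0 < 2⁻¹) ∧ -ε < z 1 ∧ z 1 < 0 :=
      fun z => Iff.rfl
    have hsqrt : ∀ x : ℝ, 0 ≤ x → x < 1 → Real.sqrt x < 1 := fun x h2 h => by
      nlinarith [Real.sq_sqrt h2, Real.sqrt_nonneg x]
    have hAsub : A ⊆ slitDisk := by
      intro z hz
      obtain ⟨⟨h1, h2⟩, h3, h4⟩ := (hAmem z).mp hz
      refine ⟨mem_ball_zero_iff.mpr ?_, fun h => h3.ne' h.2.2⟩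
      rw [EuclideanSpace.norm_eq, Fin.sum_univ_two]
      refine hsqrt _ (by positivity) ?_
      rw [Real.norm_eq_abs, Real.norm_eq_abs, sq_abs, sq_abs]
      nlinarith
    have hBsub : B ⊆ slitDisk := by
      intro z hz
      obtain ⟨⟨h1, h2⟩, h3, h4⟩ := (hBmem z).mp hz
      refine ⟨mem_ball_zero_iff.mpr ?_, fun h => h4.ne h.2.2⟩
      rw [EuclideanSpace.norm_eq, Fin.sum_univ_two]
      refine hsqrt _ (by positivity) ?_
      rw [Real.norm_eq_abs, Real.norm_eq_abs, sq_abs, sq_abs]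
      nlinarith
    have hABdisj : Disjoint A B := by
      rw [Set.disjoint_left]
      intro z hzA hzB
      obtain ⟨-, h3, -⟩ := (hAmem z).mp hzA
      obtain ⟨-, -, h4⟩ := (hBmem z).mp hzB
      linarith
    have hpreim : sigma2 ⁻¹' B = A := by
      ext z
      rw [mem_preimage, hBmem, hAmem, sigma2_apply0, sigma2_apply1]
      constructor
      · rintro ⟨h12, h3, h4⟩; exact ⟨h12, by linarith, by linarith⟩
      · rintro ⟨h12, h3, h4⟩; exact ⟨h12, by linarith, by linarith⟩
    have hσA : ∀ z ∈ A, sigma2 z ∈ B := fun z hz => by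
      rw [← hpreim] at hz; exact hz
    have volA : volume A = ENNReal.ofReal (1/4) * ENNReal.ofReal ε := by
      rw [hAdef, volume_preserving_Phi.measure_preimage
        ((measurableSet_Ioo.prod measurableSet_Ioo).nullMeasurableSet),
        Measure.volume_eq_prod, Measure.prod_prod, Real.volume_Ioo, Real.volume_Ioo]
      norm_num
    have volB : volume B = ENNReal.ofReal (1/4) * ENNReal.ofReal ε := by
      rw [hBdef, volume_preserving_Phi.measure_preimage
        ((measurableSet_Ioo.prod measurableSet_Ioo).nullMeasurableSet),
        Measure.volume_eq_prod, Measure.prod_prod, Real.volume_Ioo, Real.volume_Ioo]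
      norm_num
    -- the exceptional null set
    set Nb := toMeasurable volume (E1 ∪ sigma2 ⁻¹' E1) with hNbdef
    have hNbnull : volume Nb = 0 := by
      rw [hNbdef, measure_toMeasurable]
      exact measure_union_null hE1
        (volume_preserving_sigma2.quasiMeasurePreserving.preimage_null hE1)
    -- the pointwise estimate on `A \ Nb`
    have hpt : ∀ z ∈ A \ Nb,
        ENNReal.ofReal (1/(2*ε)) ≤ ENNReal.ofReal (g2 z) + ENNReal.ofReal (g2 (sigma2 z)) := by
      rintro z ⟨hzA, hzNb⟩
      obtain ⟨⟨h1, h2⟩, h3, h4⟩ := (hAmem z).mp hzA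
      have hzE1 : z ∉ E1 := fun h => hzNb (subset_toMeasurable _ _ (Or.inl h))
      have hσE1 : sigma2 z ∉ E1 := fun h => hzNb (subset_toMeasurable _ _ (Or.inr h))
      have hzΩ : z ∈ slitDisk := hAsub hzA
      have hσΩ : sigma2 z ∈ slitDisk := hBsub (hσA z hzA)
      have hkey := hineq2 z ⟨hzΩ, hzE1⟩ (sigma2 z) ⟨hσΩ, hσE1⟩
      have hu1 : uu z = 1 := by
        unfold uu; rw [if_pos h3]; exact al_one (by linarith)
      have hu2 : uu (sigma2 z) = 0 := by
        unfold uu; rw [if_neg]; rw [sigma2_apply1]; linarith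
      rw [hu1, hu2, sub_zero, abs_one] at hkey
      have hdist : dist z (sigma2 z) ≤ 2*ε := by
        rw [EuclideanSpace.dist_eq, Fin.sum_univ_two]
        have e0 : dist (z 0) (sigma2 z 0) = 0 := by rw [sigma2_apply0]; simp
        have e1 : dist (z 1) (sigma2 z 1) = 2 * z 1 := by
          rw [sigma2_apply1, Real.dist_eq, sub_neg_eq_add, abs_of_pos (by linarith)]
          ring
        rw [e0, e1]
        rw [show (0:ℝ)^2 = 0 by norm_num, zero_add, Real.sqrt_sq (by linarith)]
        linarith
      have hgg0 : 0 ≤ g2 z + g2 (sigma2 z) := add_nonneg (hg2nonneg _) (hg2nonneg _)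
      have hsum : 1/(2*ε) ≤ g2 z + g2 (sigma2 z) := by
        have h2e : (0:ℝ) < 2*ε := by linarith
        rw [div_le_iff₀ h2e]
        calc (1:ℝ) ≤ dist z (sigma2 z) * (g2 z + g2 (sigma2 z)) := hkey
          _ ≤ (2*ε) * (g2 z + g2 (sigma2 z)) := mul_le_mul_of_nonneg_right hdist hgg0
          _ = (g2 z + g2 (sigma2 z)) * (2*ε) := mul_comm _ _
      calc ENNReal.ofReal (1/(2*ε)) ≤ ENNReal.ofReal (g2 z + g2 (sigma2 z)) :=
            ENNReal.ofReal_le_ofReal hsum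
        _ = _ := ENNReal.ofReal_add (hg2nonneg _) (hg2nonneg _)
    -- the lower bound for the integral of `g2` on `S = A ∪ B`
    have hmeasof : Measurable fun z => ENNReal.ofReal (g2 z) :=
      ENNReal.measurable_ofReal.comp hg2meas
    have step1 : ENNReal.ofReal (1/8) ≤ ∫⁻ z in A ∪ B, ENNReal.ofReal (g2 z) := by
      have hAN : volume (A \ Nb) = volume A := measure_diff_null hNbnull
      have hmono2 : Measurable fun z =>
          ENNReal.ofReal (g2 z) + ENNReal.ofReal (g2 (sigma2 z)) :=
        hmeasof.add (hmeasof.comp sigma2.measurable)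
      calc ENNReal.ofReal (1/8)
          = ENNReal.ofReal (1/(2*ε)) * volume (A \ Nb) := by
            rw [hAN, volA, ← ENNReal.ofReal_mul (by positivity),
              ← ENNReal.ofReal_mul (by positivity)]
            congr 1
            field_simp
            ring
        _ = ∫⁻ _ in A \ Nb, ENNReal.ofReal (1/(2*ε)) := by
            rw [setLIntegral_const]
        _ ≤ ∫⁻ z in A \ Nb, (ENNReal.ofReal (g2 z) + ENNReal.ofReal (g2 (sigma2 z))) :=
            setLIntegral_mono hmono2 hpt
        _ ≤ ∫⁻ z in A, (ENNReal.ofReal (g2 z) + ENNReal.ofReal (g2 (sigma2 z))) :=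
            lintegral_mono' (Measure.restrict_mono diff_subset le_rfl) le_rfl
        _ = (∫⁻ z in A, ENNReal.ofReal (g2 z)) + ∫⁻ z in A, ENNReal.ofReal (g2 (sigma2 z)) :=
            lintegral_add_left hmeasof _
        _ = (∫⁻ z in A, ENNReal.ofReal (g2 z)) + ∫⁻ z in B, ENNReal.ofReal (g2 z) := by
            congr 1
            have h := volume_preserving_sigma2.setLIntegral_comp_preimage_emb
              sigma2.measurableEmbedding (fun z => ENNReal.ofReal (g2 z)) B
            rw [hpreim] at h
            exact h
        _ = ∫⁻ z in A ∪ B, ENNReal.ofReal (g2 z) := (lintegral_union hmB hABdisj).symm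
    -- Hölder's inequality
    set S := A ∪ B with hSdef
    have hSsub : S ⊆ slitDisk := union_subset hAsub hBsub
    have hvolS : volume S ≤ ENNReal.ofReal (ε/2) := by
      calc volume S ≤ volume A + volume B := measure_union_le _ _
        _ = ENNReal.ofReal (ε/2) := by
            rw [volA, volB, ← ENNReal.ofReal_mul (by norm_num),
              ← ENNReal.ofReal_add (by positivity) (by positivity)]
            congr 1
            ring
    have h1S : eLpNorm g2 1 (volume.restrict S) = ∫⁻ z in S, ENNReal.ofReal (g2 z) := by
      rw [eLpNorm_one_eq_lintegral_enorm]
      exact lintegral_congr fun z => Real.enorm_eq_ofReal (hg2nonneg z)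
    have hold : eLpNorm g2 1 (volume.restrict S)
        ≤ eLpNorm g2 p (volume.restrict S) * (volume.restrict S) univ ^ (1/(1:ℝ≥0∞).toReal - 1/p.toReal) :=
      eLpNorm_le_eLpNorm_mul_rpow_measure_univ hp.le hg2meas.aestronglyMeasurable
    have hexp : 1/(1:ℝ≥0∞).toReal - 1/p.toReal = t := by
      rw [htdef]; norm_num
    have hmono3 : eLpNorm g2 p (volume.restrict S) ≤ N :=
      eLpNorm_mono_measure _ (Measure.restrict_mono hSsub le_rfl)
    have hrest : (volume.restrict S) univ = volume S := by
      rw [Measure.restrict_apply_univ]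
    calc ENNReal.ofReal (1/8) ≤ ∫⁻ z in S, ENNReal.ofReal (g2 z) := step1
      _ = eLpNorm g2 1 (volume.restrict S) := h1S.symm
      _ ≤ eLpNorm g2 p (volume.restrict S) * (volume.restrict S) univ ^ (1/(1:ℝ≥0∞).toReal - 1/p.toReal) := hold
      _ = eLpNorm g2 p (volume.restrict S) * volume S ^ t := by rw [hexp, hrest]
      _ ≤ N * ENNReal.ofReal (ε/2) ^ t :=
          mul_le_mul' hmono3 (ENNReal.rpow_le_rpow hvolS ht.le)
  -- derive a contradiction
  have hofpos : (0:ℝ≥0∞) < ENNReal.ofReal (1/8) := ENNReal.ofReal_pos.mpr (by norm_num)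
  by_cases hN0 : N = 0
  · have h := main (1/2) (by norm_num) le_rfl
    rw [hN0, zero_mul] at h
    exact absurd h hofpos.not_ge
  · have h8N0 : (8:ℝ≥0∞) * N ≠ 0 := mul_ne_zero (by norm_num) hN0
    have h8Ntop : (8:ℝ≥0∞) * N ≠ ⊤ := ENNReal.mul_ne_top (by norm_num) hNtop
    have hinv0 : ((8:ℝ≥0∞)*N)⁻¹ ≠ 0 := ENNReal.inv_ne_zero.mpr h8Ntop
    have hinvtop : ((8:ℝ≥0∞)*N)⁻¹ ≠ ⊤ := ENNReal.inv_ne_top.mpr h8N0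
    have hrpow0 : (0:ℝ≥0∞) < ((8:ℝ≥0∞)*N)⁻¹ ^ (1/t) :=
      ENNReal.rpow_pos (pos_iff_ne_zero.mpr hinv0) hinvtop
    have hrpowtop : ((8:ℝ≥0∞)*N)⁻¹ ^ (1/t) ≠ ⊤ :=
      ENNReal.rpow_ne_top_of_nonneg (by positivity) hinvtop
    set c := (((8:ℝ≥0∞) * N)⁻¹ ^ (1/t)).toReal with hcdef
    have hc0 : 0 < c := ENNReal.toReal_pos hrpow0.ne' hrpowtop
    set ε := min (1/2 : ℝ) (c/2) with hεdef
    have hε0 : 0 < ε := lt_min (by norm_num) (by linarith)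
    have hεhalf : ε ≤ 1/2 := min_le_left _ _
    have hlt : ENNReal.ofReal (ε/2) < ((8:ℝ≥0∞)*N)⁻¹ ^ (1/t) := by
      have h1 : ε/2 < c := by
        have h2 := min_le_right (1/2 : ℝ) (c/2)
        calc ε/2 ≤ (c/2)/2 := by rw [hεdef]; linarith
          _ < c := by linarith
      calc ENNReal.ofReal (ε/2) < ENNReal.ofReal c := (ENNReal.ofReal_lt_ofReal_iff hc0).mpr h1
        _ = ((8:ℝ≥0∞)*N)⁻¹ ^ (1/t) := ENNReal.ofReal_toReal hrpowtop
    have hfinal : N * ENNReal.ofReal (ε/2) ^ t < ENNReal.ofReal (1/8) := by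
      have h2 : ENNReal.ofReal (ε/2) ^ t < (((8:ℝ≥0∞)*N)⁻¹ ^ (1/t)) ^ t :=
        ENNReal.rpow_lt_rpow hlt ht
      rw [← ENNReal.rpow_mul, one_div, inv_mul_cancel₀ ht.ne', ENNReal.rpow_one] at h2
      have h18 : ENNReal.ofReal (1/8) = ((8:ℝ≥0∞))⁻¹ := by
        rw [one_div, ENNReal.ofReal_inv_of_pos (by norm_num)]
        norm_num
      calc N * ENNReal.ofReal (ε/2) ^ t < N * ((8:ℝ≥0∞)*N)⁻¹ :=
            (ENNReal.mul_lt_mul_iff_right hN0 hNtop).mpr h2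
        _ = ENNReal.ofReal (1/8) := by
            rw [ENNReal.mul_inv (Or.inl (by norm_num)) (Or.inl (by norm_num)), h18]
            calc N * ((8:ℝ≥0∞)⁻¹ * N⁻¹) = (N * N⁻¹) * (8:ℝ≥0∞)⁻¹ := by ring
              _ = (8:ℝ≥0∞)⁻¹ := by rw [ENNReal.mul_inv_cancel hN0 hNtop, one_mul]
    exact absurd (main ε hε0 hεhalf) hfinal.not_ge

end SlitDiskProof

/-- For the slit disk `Ω ⊆ ℝ²`, `M^{1,p}(Ω) ≠ W^{1,p}(Ω)` for every
`1 < p ≤ ∞`: there is a Sobolev function which is not a Hajłasz–Sobolev function. -/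
theorem slitDisk_M1p_ne_W1p (p : ℝ≥0∞) (hp : 1 < p) :
    ∃ u : EuclideanSpace ℝ (Fin 2) → ℝ, MemW1p p slitDisk u ∧ ¬ MemM1p p slitDisk u := by
  refine ⟨SlitDiskProof.uu, ⟨?_, SlitDiskProof.GG, SlitDiskProof.weakGradient, ?_⟩,
    SlitDiskProof.not_memM1p p hp⟩
  · exact MemLp.of_bound SlitDiskProof.measurable_uu.aestronglyMeasurable 1
      (ae_of_all _ SlitDiskProof.abs_uu_le)
  · obtain ⟨C, hC0, hC⟩ := SlitDiskProof.exists_bound_deriv_al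
    refine MemLp.of_bound SlitDiskProof.measurable_GG.norm.aestronglyMeasurable C
      (ae_of_all _ fun z => ?_)
    rw [norm_norm]
    exact SlitDiskProof.norm_GG_le hC0 hC z
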